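/- arXiv:1611.01857 — 9 statements merged into one kernel-verified Lean document; each statement's English description precedes it below -/
import Mathlib

section
/- Let V be a real normed vector space and let A, B, C ⊆ V be nonempty finite subsets. If convexHull ℝ A + convexHull ℝ B = convexHull ℝ A + convexHull ℝ C, then convexHull ℝ B = convexHull ℝ C. (Cancellation property for Minkowski sums of polytopes.) -/
/-!
Rådström's argument. Iterating `K + P ⊆ K + Q` gives `K + n • P ⊆ K + n • Q`, and convexity
turns the `n`-fold Minkowski sum `n • Q` into the dilate `(n : ℝ) • Q`. So for `b ∈ P` and
`a₀ ∈ K` we get `a₀ + n • b = a + n • q` with `a ∈ K`, `q ∈ Q`, whence `‖b - q‖ ≤ diam K / n`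
and `b` lies in the closure of `Q`. For polytopes, `K = conv A` is bounded and `conv B`,
`conv C` are closed, being compact.
-/

open Pointwise

theorem add_nsmul_subset_add_nsmul {M : Type*} [AddCommMonoid M] {K P Q : Set M}
    (h : K + P ⊆ K + Q) (n : ℕ) : K + n • P ⊆ K + n • Q := by
  induction n with
  | zero => rfl
  | succ n ih =>
    calc K + (n + 1) • P = (K + P) + n • P := by rw [succ_nsmul', add_assoc]
      _ ⊆ (K + Q) + n • P := Set.add_subset_add_right h
      _ = (K + n • P) + Q := add_right_comm _ _ _
      _ ⊆ (K + n • Q) + Q := Set.add_subset_add_right ih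
      _ = K + (n + 1) • Q := by rw [succ_nsmul, add_assoc]

theorem Convex.nsmul_eq_natCast_smul {𝕜 E : Type*} [Field 𝕜] [LinearOrder 𝕜]
    [IsStrictOrderedRing 𝕜] [AddCommGroup E] [Module 𝕜 E] {s : Set E} (hs : Convex 𝕜 s)
    {n : ℕ} (hn : n ≠ 0) : n • s = (n : 𝕜) • s := by
  obtain ⟨m, rfl⟩ := Nat.exists_eq_add_one_of_ne_zero hn
  induction m with
  | zero => simp
  | succ m ih =>
    rw [succ_nsmul, ih m.succ_ne_zero, Nat.cast_succ (m + 1),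
      hs.add_smul (Nat.cast_nonneg _) zero_le_one, one_smul]

theorem subset_closure_of_add_subset_add {V : Type*} [SeminormedAddCommGroup V]
    [NormedSpace ℝ V] {K P Q : Set V} (hK : Bornology.IsBounded K) (hKne : K.Nonempty)
    (hQ : Convex ℝ Q) (h : K + P ⊆ K + Q) : P ⊆ closure Q := by
  intro b hb
  obtain ⟨a₀, ha₀⟩ := hKne
  rw [Metric.mem_closure_iff]
  intro ε hε
  obtain ⟨n, hn⟩ := exists_nat_gt (Metric.diam K / ε)
  have hn_pos : (0 : ℝ) < n := (div_nonneg Metric.diam_nonneg hε.le).trans_lt hn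
  have hmem : a₀ + n • b ∈ K + n • Q :=
    add_nsmul_subset_add_nsmul h n (Set.add_mem_add ha₀ (Set.nsmul_mem_nsmul hb))
  rw [hQ.nsmul_eq_natCast_smul (Nat.cast_pos.mp hn_pos).ne'] at hmem
  obtain ⟨a, ha, _, ⟨q, hq, rfl⟩, heq⟩ := hmem
  refine ⟨q, hq, ?_⟩
  have hscaled : (n : ℝ) • (b - q) = a - a₀ := by
    rw [← Nat.cast_smul_eq_nsmul ℝ] at heq
    linear_combination (norm := module) -heq
  refine lt_of_mul_lt_mul_left ?_ hn_pos.le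
  calc (n : ℝ) * dist b q = ‖(n : ℝ) • (b - q)‖ := by
        rw [norm_smul, Real.norm_natCast, dist_eq_norm]
    _ = dist a a₀ := by rw [hscaled, dist_eq_norm]
    _ ≤ Metric.diam K := Metric.dist_le_diam_of_mem hK ha ha₀
    _ < n * ε := (div_lt_iff₀ hε).mp hn

theorem subset_of_add_subset_add {V : Type*} [SeminormedAddCommGroup V]
    [NormedSpace ℝ V] {K P Q : Set V} (hK : Bornology.IsBounded K) (hKne : K.Nonempty)
    (hQ : Convex ℝ Q) (hQc : IsClosed Q) (h : K + P ⊆ K + Q) : P ⊆ Q :=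
  hQc.closure_eq ▸ subset_closure_of_add_subset_add hK hKne hQ h

theorem polytope_minkowski_cancellation_general {V : Type*} [NormedAddCommGroup V] [NormedSpace ℝ V]
    (A B C : Set V) (hAfin : A.Finite) (hAne : A.Nonempty)
    (hBfin : B.Finite) (hCfin : C.Finite)
    (h : convexHull ℝ A + convexHull ℝ B = convexHull ℝ A + convexHull ℝ C) :
    convexHull ℝ B = convexHull ℝ C := by
  have hK : Bornology.IsBounded (convexHull ℝ A) := (hAfin.isCompact_convexHull ℝ).isBounded
  have hKne : (convexHull ℝ A).Nonempty := hAne.mono (subset_convexHull ℝ A)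
  exact (subset_of_add_subset_add hK hKne (convex_convexHull ℝ C)
      (hCfin.isCompact_convexHull ℝ).isClosed h.le).antisymm
    (subset_of_add_subset_add hK hKne (convex_convexHull ℝ B)
      (hBfin.isCompact_convexHull ℝ).isClosed h.ge)

/-- Cancellation property for Minkowski sums of polytopes in a real normed
vector space. -/
theorem polytope_minkowski_cancellation {V : Type*} [NormedAddCommGroup V] [NormedSpace ℝ V]
    (A B C : Set V) (hAfin : A.Finite) (hAne : A.Nonempty)
    (hBfin : B.Finite) (hBne : B.Nonempty)
    (hCfin : C.Finite) (hCne : C.Nonempty)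
    (h : convexHull ℝ A + convexHull ℝ B = convexHull ℝ A + convexHull ℝ C) :
    convexHull ℝ B = convexHull ℝ C :=
  polytope_minkowski_cancellation_general A B C hAfin hAne hBfin hCfin h
end

section
/- Let V be a real normed vector space and let A, B, C ⊆ V be nonempty finite subsets. If there exists a vector v ∈ V such that convexHull ℝ A + convexHull ℝ B = v +ᵥ (convexHull ℝ A + convexHull ℝ C), then there exists a vector w ∈ V with convexHull ℝ B = w +ᵥ convexHull ℝ C. (The monoid of translation-equivalence classes of polytopes under Minkowski sum is cancellative.) -/
/-!
Rådström cancellation. If `A + B ⊆ A + C` with `C` convex, then iterating gives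
`A + {n • b} ⊆ A + n • C` for every `b ∈ B`, since `n • C + C = (n + 1) • C` by convexity.
So `a + n • b = a' + n • c` with `a, a' ∈ A`, `c ∈ C`, i.e. `‖b - c‖ ≤ diam A / n`; when `A` is
bounded and `C` closed this forces `b ∈ C`. Applied in both directions to the compact convex
hulls, `conv A + conv B = conv A + (v +ᵥ conv C)` yields `conv B = v +ᵥ conv C`.
-/

open Pointwise Set

section

variable {V : Type*}

lemma add_smul_singleton_subset_add_smul [AddCommGroup V] [Module ℝ V] {A C : Set V} {b : V}
    (hC : Convex ℝ C) (h : A + {b} ⊆ A + C) (n : ℕ) :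
    A + {(n + 1 : ℝ) • b} ⊆ A + (n + 1 : ℝ) • C := by
  induction n with
  | zero => simpa using h
  | succ n ih =>
    push_cast
    rw [add_smul, one_smul, ← singleton_add_singleton, ← add_assoc,
      hC.add_smul (by positivity) zero_le_one, one_smul]
    calc A + {(n + 1 : ℝ) • b} + {b} ⊆ A + (n + 1 : ℝ) • C + {b} := add_subset_add_right ih
      _ = A + {b} + (n + 1 : ℝ) • C := by abel
      _ ⊆ A + C + (n + 1 : ℝ) • C := add_subset_add_right h
      _ = A + ((n + 1 : ℝ) • C + C) := by abel

lemma Convex.subset_of_add_subset_add [NormedAddCommGroup V] [NormedSpace ℝ V]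
    {A B C : Set V} (hA : A.Nonempty) (hAb : Bornology.IsBounded A) (hC : Convex ℝ C)
    (hCc : IsClosed C) (h : A + B ⊆ A + C) : B ⊆ C := by
  intro b hb
  rw [← hCc.closure_eq, Metric.mem_closure_iff]
  intro ε hε
  obtain ⟨a, ha⟩ := hA
  obtain ⟨R, hR⟩ := hAb.exists_norm_le
  obtain ⟨n, hn⟩ := exists_nat_gt (2 * R / ε)
  have hpos : (0 : ℝ) < n + 1 := by positivity
  have hmem : a + (n + 1 : ℝ) • b ∈ A + (n + 1 : ℝ) • C :=
    add_smul_singleton_subset_add_smul hC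
      ((add_subset_add_left (singleton_subset_iff.2 hb)).trans h) n
      (add_mem_add ha rfl)
  obtain ⟨a', ha', _, ⟨c, hc, rfl⟩, hsum⟩ := hmem
  refine ⟨c, hc, ?_⟩
  have hbc : (n + 1 : ℝ) • (b - c) = a' - a := by
    rw [smul_sub, sub_eq_sub_iff_add_eq_add, add_comm, ← hsum]
  have hnorm : (n + 1 : ℝ) * dist b c ≤ 2 * R := by
    rw [dist_eq_norm, ← abs_of_pos hpos, ← Real.norm_eq_abs, ← norm_smul, hbc]
    linarith [norm_sub_le a' a, hR a' ha', hR a ha]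
  rw [div_lt_iff₀ hε] at hn
  nlinarith

lemma Convex.eq_of_add_eq_add [NormedAddCommGroup V] [NormedSpace ℝ V] {A B C : Set V}
    (hA : A.Nonempty) (hAb : Bornology.IsBounded A) (hB : Convex ℝ B) (hBc : IsClosed B)
    (hC : Convex ℝ C) (hCc : IsClosed C) (h : A + B = A + C) : B = C :=
  (hC.subset_of_add_subset_add hA hAb hCc h.le).antisymm
    (hB.subset_of_add_subset_add hA hAb hBc h.ge)

end

theorem polytope_translation_classes_cancellation_general {V : Type*}
    [NormedAddCommGroup V] [NormedSpace ℝ V]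
    (A B C : Set V) (hAfin : A.Finite) (hAne : A.Nonempty)
    (hBfin : B.Finite)
    (hCfin : C.Finite)
    (h : ∃ v : V, convexHull ℝ A + convexHull ℝ B =
        v +ᵥ (convexHull ℝ A + convexHull ℝ C)) :
    ∃ w : V, convexHull ℝ B = w +ᵥ convexHull ℝ C := by
  obtain ⟨v, hv⟩ := h
  rw [← add_vadd_comm] at hv
  exact ⟨v, (convex_convexHull ℝ B).eq_of_add_eq_add (hAne.mono (subset_convexHull ℝ A))
    (hAfin.isCompact_convexHull ℝ).isBounded (hBfin.isCompact_convexHull ℝ).isClosed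
    ((convex_convexHull ℝ C).vadd v) ((hCfin.isCompact_convexHull ℝ).isClosed.vadd v) hv⟩

/-- The monoid of translation-equivalence classes of polytopes under Minkowski
sum is cancellative: if `convexHull ℝ A + convexHull ℝ B` is a translate of
`convexHull ℝ A + convexHull ℝ C`, then `convexHull ℝ B` is a translate of
`convexHull ℝ C`. -/
theorem polytope_translation_classes_cancellation {V : Type*}
    [NormedAddCommGroup V] [NormedSpace ℝ V]
    (A B C : Set V) (hAfin : A.Finite) (hAne : A.Nonempty)
    (hBfin : B.Finite) (hBne : B.Nonempty)
    (hCfin : C.Finite) (hCne : C.Nonempty)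
    (h : ∃ v : V, convexHull ℝ A + convexHull ℝ B =
        v +ᵥ (convexHull ℝ A + convexHull ℝ C)) :
    ∃ w : V, convexHull ℝ B = w +ᵥ convexHull ℝ C :=
  polytope_translation_classes_cancellation_general A B C hAfin hAne hBfin hCfin h
end

section
/- Let V be a real vector space and φ : V → ℝ a linear map. Let P, Q, P', Q' ⊆ V be polytopes (convex hulls of nonempty finite sets) and suppose there exists v ∈ V with P + Q' = v +ᵥ (P' + Q). Then th_φ(P) − th_φ(Q) = th_φ(P') − th_φ(Q'), where th_φ(S) = sSup (φ '' S) − sInf (φ '' S). (Thickness descends to a well-defined function on the Grothendieck group of polytopes.) -/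
open Pointwise

/-!
The image of a polytope under `φ` is a compact interval, and on nonempty bounded subsets of `ℝ`
both `sSup` and `sInf` are additive for Minkowski sums. Hence the thickness `th_φ` is additive
for Minkowski sums and invariant under translation (a translate is the sum with a point, of
thickness zero). Applying `th_φ` to `P + Q' = v +ᵥ (P' + Q)` gives
`th_φ P + th_φ Q' = th_φ P' + th_φ Q`.
-/

noncomputable def thickness {V : Type*} [AddCommGroup V] [Module ℝ V] (φ : V →ₗ[ℝ] ℝ)
    (S : Set V) : ℝ :=
  sSup (φ '' S) - sInf (φ '' S)

section Thickness

variable {V : Type*} [AddCommGroup V] [Module ℝ V] (φ : V →ₗ[ℝ] ℝ)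

theorem thickness_singleton (v : V) : thickness φ {v} = 0 := by
  simp [thickness]

theorem thickness_add {S T : Set V} (hS : Bornology.IsBounded (φ '' S)) (hSne : S.Nonempty)
    (hT : Bornology.IsBounded (φ '' T)) (hTne : T.Nonempty) :
    thickness φ (S + T) = thickness φ S + thickness φ T := by
  have hSne' := hSne.image φ
  have hTne' := hTne.image φ
  rw [thickness, Set.image_add, csSup_add hSne' hS.bddAbove hTne' hT.bddAbove,
    csInf_add hSne' hS.bddBelow hTne' hT.bddBelow, thickness, thickness]
  ring

theorem thickness_vadd {S : Set V} (hS : Bornology.IsBounded (φ '' S)) (hSne : S.Nonempty)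
    (v : V) :
    thickness φ (v +ᵥ S) = thickness φ S := by
  rw [← Set.singleton_vadd, vadd_eq_add,
    thickness_add φ (by simp) (Set.singleton_nonempty v) hS hSne, thickness_singleton, zero_add]

theorem isBounded_image_convexHull {S : Set V} (hS : S.Finite) :
    Bornology.IsBounded (φ '' convexHull ℝ S) := by
  rw [φ.image_convexHull]
  exact ((hS.image φ).isCompact_convexHull ℝ).isBounded

end Thickness

/-- Thickness descends to a well-defined function on the Grothendieck group of
polytopes: if the formal differences of polytopes `(P, Q)` and `(P', Q')`
represent the same element, i.e. `P + Q'` is a translate of `P' + Q`, then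
`th_φ P - th_φ Q = th_φ P' - th_φ Q'`. -/
theorem thickness_well_defined_on_grothendieck_group {V : Type*}
    [AddCommGroup V] [Module ℝ V] (φ : V →ₗ[ℝ] ℝ)
    (A B A' B' : Set V)
    (hAfin : A.Finite) (hAne : A.Nonempty)
    (hBfin : B.Finite) (hBne : B.Nonempty)
    (hA'fin : A'.Finite) (hA'ne : A'.Nonempty)
    (hB'fin : B'.Finite) (hB'ne : B'.Nonempty)
    (h : ∃ v : V, convexHull ℝ A + convexHull ℝ B' =
        v +ᵥ (convexHull ℝ A' + convexHull ℝ B)) :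
    (sSup (φ '' convexHull ℝ A) - sInf (φ '' convexHull ℝ A)) -
        (sSup (φ '' convexHull ℝ B) - sInf (φ '' convexHull ℝ B)) =
      (sSup (φ '' convexHull ℝ A') - sInf (φ '' convexHull ℝ A')) -
        (sSup (φ '' convexHull ℝ B') - sInf (φ '' convexHull ℝ B')) := by
  obtain ⟨v, hv⟩ := h
  have hA := isBounded_image_convexHull φ hAfin
  have hB := isBounded_image_convexHull φ hBfin
  have hA' := isBounded_image_convexHull φ hA'fin
  have hB' := isBounded_image_convexHull φ hB'fin
  have hA'B : Bornology.IsBounded (φ '' (convexHull ℝ A' + convexHull ℝ B)) := by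
    rw [Set.image_add]
    exact isBounded_add hA' hB
  have key : thickness φ (convexHull ℝ A) + thickness φ (convexHull ℝ B') =
      thickness φ (convexHull ℝ A') + thickness φ (convexHull ℝ B) := by
    rw [← thickness_add φ hA hAne.convexHull hB' hB'ne.convexHull, hv,
      thickness_vadd φ hA'B (hA'ne.convexHull.add hBne.convexHull),
      thickness_add φ hA' hA'ne.convexHull hB hBne.convexHull]
  unfold thickness at key
  linarith
end

section
/- Let V be a real vector space and let A, B ⊆ V be convex sets. If x is an extreme point of A + B (in the sense of Set.extremePoints ℝ), then there exist a ∈ A and b ∈ B with x = a + b such that a is an extreme point of A, b is an extreme point of B, and this decomposition is unique: for all a' ∈ A and b' ∈ B with a' + b' = x one has a' = a and b' = b. -/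
open Pointwise

section
variable {𝕜 E : Type*} [Ring 𝕜] [LinearOrder 𝕜] [IsStrictOrderedRing 𝕜] [AddCommGroup E]
  [Module 𝕜 E] {A B : Set E} {a b : E}

theorem mem_extremePoints_of_add_mem_extremePoints_add (ha : a ∈ A) (hb : b ∈ B)
    (hab : a + b ∈ (A + B).extremePoints 𝕜) : a ∈ A.extremePoints 𝕜 := by
  refine ⟨ha, fun a₁ ha₁ a₂ ha₂ hseg ↦ ?_⟩
  have hseg' : b + a ∈ openSegment 𝕜 (b + a₁) (b + a₂) :=
    (mem_openSegment_translate 𝕜 b).2 hseg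
  simp only [add_comm b] at hseg'
  exact add_right_cancel (hab.2 (Set.add_mem_add ha₁ hb) (Set.add_mem_add ha₂ hb) hseg')

theorem eq_of_add_eq_of_add_mem_extremePoints_add [Invertible (2 : 𝕜)] {a' b' : E}
    (ha : a ∈ A) (ha' : a' ∈ A) (hb : b ∈ B) (hb' : b' ∈ B)
    (hab : a + b ∈ (A + B).extremePoints 𝕜) (h : a' + b' = a + b) : a' = a ∧ b' = b := by
  have hmid : midpoint 𝕜 (a + b') (a' + b) = a + b := by
    rw [midpoint_eq_iff, AffineEquiv.pointReflection_apply, vsub_eq_sub, vadd_eq_add]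
    linear_combination (norm := module) -h
  obtain ⟨hb'_eq, ha'_eq⟩ := (mem_extremePoints.1 hab).2 _ (Set.add_mem_add ha hb')
    _ (Set.add_mem_add ha' hb) (hmid ▸ midpoint_mem_openSegment _ _)
  exact ⟨add_right_cancel ha'_eq, add_left_cancel hb'_eq⟩
end

theorem extremePoints_minkowski_sum_general {V : Type*} [AddCommGroup V] [Module ℝ V]
    (A B : Set V) (x : V)
    (hx : x ∈ Set.extremePoints ℝ (A + B)) :
    ∃ a ∈ A, ∃ b ∈ B, x = a + b ∧
      a ∈ Set.extremePoints ℝ A ∧ b ∈ Set.extremePoints ℝ B ∧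
      ∀ a' ∈ A, ∀ b' ∈ B, a' + b' = x → a' = a ∧ b' = b := by
  obtain ⟨a, ha, b, hb, rfl⟩ := hx.1
  refine ⟨a, ha, b, hb, rfl, mem_extremePoints_of_add_mem_extremePoints_add ha hb hx,
    mem_extremePoints_of_add_mem_extremePoints_add hb ha ?_,
    fun a' ha' b' hb' h ↦ eq_of_add_eq_of_add_mem_extremePoints_add ha ha' hb hb' hx h⟩
  rwa [add_comm B, add_comm b]

/-- An extreme point of the Minkowski sum of two convex sets decomposes
uniquely as the sum of an extreme point of each summand. -/
theorem extremePoints_minkowski_sum {V : Type*} [AddCommGroup V] [Module ℝ V]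
    (A B : Set V) (hA : Convex ℝ A) (hB : Convex ℝ B) (x : V)
    (hx : x ∈ Set.extremePoints ℝ (A + B)) :
    ∃ a ∈ A, ∃ b ∈ B, x = a + b ∧
      a ∈ Set.extremePoints ℝ A ∧ b ∈ Set.extremePoints ℝ B ∧
      ∀ a' ∈ A, ∀ b' ∈ B, a' + b' = x → a' = a ∧ b' = b :=
  extremePoints_minkowski_sum_general A B x hx
end

section
/- Let n be a natural number, let R be a nontrivial (possibly noncommutative) ring with no zero divisors, and let f, g be nonzero elements of the Laurent polynomial ring AddMonoidAlgebra R (Fin n → ℤ). Then f * g ≠ 0 and the Newton polytope of f * g equals the Minkowski sum of the Newton polytopes of f and g: convexHull ℝ (ι '' support (f * g)) = convexHull ℝ (ι '' support f) + convexHull ℝ (ι '' support g), where ι : (Fin n → ℤ) → (Fin n → ℝ) is the coordinatewise coercion. -/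
/-!
Every monomial exponent of `f * g` is a sum `a + b` of exponents of `f` and `g`, so the Newton
polytope of `f * g` lies in `N(f) + N(g) = conv(supp f + supp g)`. Conversely, a vertex `a₀ + b₀`
of this polytope is reached by a single pair of exponents: if also `a + b = a₀ + b₀`, then `a₀ + b₀`
is the midpoint of `a + b₀` and `a₀ + b`, so extremality forces `a = a₀` and `b = b₀`. Hence the
coefficient of `f * g` at a vertex is the product of two nonzero coefficients, which is nonzero, and
a polytope is the convex hull of its vertices.
-/

open Pointwise

def latticeToReal (n : ℕ) : (Fin n → ℤ) → (Fin n → ℝ) := fun v i => (v i : ℝ)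

section ExtremePoints

variable {𝕜 E : Type*} [Field 𝕜] [LinearOrder 𝕜] [IsStrictOrderedRing 𝕜] [AddCommGroup E]
  [Module 𝕜 E]

theorem eq_and_eq_of_add_eq_of_add_mem_extremePoints {A B : Set E} {a a₀ b b₀ : E}
    (hext : a₀ + b₀ ∈ (convexHull 𝕜 (A + B)).extremePoints 𝕜)
    (ha : a ∈ A) (ha₀ : a₀ ∈ A) (hb : b ∈ B) (hb₀ : b₀ ∈ B) (hab : a + b = a₀ + b₀) :
    a = a₀ ∧ b = b₀ := by
  have hmid : a₀ + b₀ ∈ openSegment 𝕜 (a + b₀) (a₀ + b) := by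
    obtain rfl : b = a₀ + b₀ - a := eq_sub_of_add_eq' hab
    exact ⟨1 / 2, 1 / 2, by norm_num, by norm_num, by norm_num, by module⟩
  have hmem {x y} (hx : x ∈ A) (hy : y ∈ B) : x + y ∈ convexHull 𝕜 (A + B) :=
    subset_convexHull 𝕜 _ (Set.add_mem_add hx hy)
  have h := (mem_extremePoints.mp hext).2 _ (hmem ha hb₀) _ (hmem ha₀ hb) hmid
  exact ⟨add_right_cancel h.1, add_left_cancel h.2⟩

end ExtremePoints

theorem Set.Finite.convexHull_subset_of_extremePoints_subset {E : Type*} [AddCommGroup E]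
    [Module ℝ E] [TopologicalSpace E] [T2Space E] [IsTopologicalAddGroup E] [ContinuousSMul ℝ E]
    [LocallyConvexSpace ℝ E] {s t : Set E} (hs : s.Finite)
    (h : (convexHull ℝ s).extremePoints ℝ ⊆ t) : convexHull ℝ s ⊆ convexHull ℝ t := by
  have hext : ((convexHull ℝ s).extremePoints ℝ).Finite := hs.subset extremePoints_convexHull_subset
  calc convexHull ℝ s
      = closure (convexHull ℝ ((convexHull ℝ s).extremePoints ℝ)) :=
        (closure_convexHull_extremePoints (hs.isCompact_convexHull ℝ) (convex_convexHull ℝ s)).symm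
    _ = convexHull ℝ ((convexHull ℝ s).extremePoints ℝ) :=
        (hext.isCompact_convexHull ℝ).isClosed.closure_eq
    _ ⊆ convexHull ℝ t := convexHull_mono h

namespace AddMonoidAlgebra

variable {R M E : Type*} [Semiring R] [NoZeroDivisors R] [AddCancelCommMonoid M]

theorem extremePoints_convexHull_add_image_support_subset {𝕜 : Type*} [Field 𝕜] [LinearOrder 𝕜]
    [IsStrictOrderedRing 𝕜] [AddCommGroup E] [Module 𝕜 E] (φ : M →+ E)
    (hφ : Function.Injective φ) (f g : AddMonoidAlgebra R M) :
    (convexHull 𝕜 (φ '' f.coeff.support + φ '' g.coeff.support)).extremePoints 𝕜 ⊆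
      φ '' (f * g).coeff.support := by
  rintro _ hext
  obtain ⟨_, ⟨a₀, ha₀, rfl⟩, _, ⟨b₀, hb₀, rfl⟩, rfl⟩ := extremePoints_convexHull_subset hext
  have hunique : UniqueAdd f.coeff.support g.coeff.support a₀ b₀ := by
    intro a b ha hb hab
    have h := eq_and_eq_of_add_eq_of_add_mem_extremePoints hext (Set.mem_image_of_mem φ ha)
      (Set.mem_image_of_mem φ ha₀) (Set.mem_image_of_mem φ hb) (Set.mem_image_of_mem φ hb₀)
      (by rw [← map_add, ← map_add, hab])
    exact ⟨hφ h.1, hφ h.2⟩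
  refine ⟨a₀ + b₀, ?_, map_add φ a₀ b₀⟩
  rw [Finset.mem_coe, Finsupp.mem_support_iff, coeff_mul_add_of_uniqueAdd hunique]
  exact mul_ne_zero (Finsupp.mem_support_iff.mp ha₀) (Finsupp.mem_support_iff.mp hb₀)

theorem convexHull_image_support_mul [AddCommGroup E] [Module ℝ E] [TopologicalSpace E]
    [T2Space E] [IsTopologicalAddGroup E] [ContinuousSMul ℝ E] [LocallyConvexSpace ℝ E]
    (φ : M →+ E) (hφ : Function.Injective φ) (f g : AddMonoidAlgebra R M) :
    convexHull ℝ (φ '' (f * g).coeff.support) =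
      convexHull ℝ (φ '' f.coeff.support) + convexHull ℝ (φ '' g.coeff.support) := by
  classical
  have hsum : φ '' ↑(f.coeff.support + g.coeff.support) =
      φ '' f.coeff.support + φ '' g.coeff.support := by
    rw [Finset.coe_add, Set.image_add]
  rw [← convexHull_add, ← hsum]
  refine (convexHull_mono (Set.image_mono (support_coeff_mul_subset f g))).antisymm ?_
  refine ((Finset.finite_toSet _).image φ).convexHull_subset_of_extremePoints_subset ?_
  rw [hsum]
  exact extremePoints_convexHull_add_image_support_subset φ hφ f g

end AddMonoidAlgebra

theorem latticeToReal_eq_compLeft (n : ℕ) :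
    latticeToReal n = (Int.castAddHom ℝ).compLeft (Fin n) :=
  rfl

theorem newtonPolytope_mul_general {n : ℕ} {R : Type*} [Ring R] [NoZeroDivisors R]
    (f g : AddMonoidAlgebra R (Fin n → ℤ)) (hf : f ≠ 0) (hg : g ≠ 0) :
    f * g ≠ 0 ∧
    convexHull ℝ (latticeToReal n '' ↑(f * g).coeff.support) =
      convexHull ℝ (latticeToReal n '' ↑f.coeff.support) +
        convexHull ℝ (latticeToReal n '' ↑g.coeff.support) := by
  rw [latticeToReal_eq_compLeft]
  exact ⟨mul_ne_zero hf hg,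
    AddMonoidAlgebra.convexHull_image_support_mul _ Int.cast_injective.comp_left f g⟩

/-- Over a nontrivial ring without zero divisors, the product of two nonzero
Laurent polynomials in `n` variables is nonzero and the Newton polytope of a
product is the Minkowski sum of the Newton polytopes of the factors. -/
theorem newtonPolytope_mul {n : ℕ} {R : Type*} [Ring R] [Nontrivial R] [NoZeroDivisors R]
    (f g : AddMonoidAlgebra R (Fin n → ℤ)) (hf : f ≠ 0) (hg : g ≠ 0) :
    f * g ≠ 0 ∧
    convexHull ℝ (latticeToReal n '' ↑(f * g).coeff.support) =
      convexHull ℝ (latticeToReal n '' ↑f.coeff.support) +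
        convexHull ℝ (latticeToReal n '' ↑g.coeff.support) :=
  newtonPolytope_mul_general f g hf hg
end

section
/- Let n be a natural number, let R be a nontrivial (possibly noncommutative) ring with no zero divisors, and let f, g be nonzero elements of AddMonoidAlgebra R (Fin n → ℤ). Let u ∈ (Fin n → ℤ) be such that ι(u) is an extreme point of convexHull ℝ (ι '' support f) + convexHull ℝ (ι '' support g), where ι : (Fin n → ℤ) → (Fin n → ℝ) is the coordinatewise coercion. Then there exist unique v ∈ support f and w ∈ support g with v + w = u; moreover ι(v) is an extreme point of the Newton polytope of f, ι(w) is an extreme point of the Newton polytope of g, and the coefficient of f * g at u equals (f v) * (g w), which is nonzero. -/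
/-!
An extreme point `x` of a Minkowski sum `A + B` has a unique decomposition `x = a + b` with
`a ∈ A`, `b ∈ B`, and then `a`, `b` are extreme in `A`, `B`: if also `x = a' + b'`, then `x` is the
midpoint of `a + b'` and `a' + b`. Extreme points of the convex hull of a finite set lie in the set,
so the exponent `u` is reached by exactly one pair of monomials of `f` and `g`, and the coefficient
of `f * g` at `u` is the single product `f v * g w`, nonzero as `R` has no zero divisors.
-/

open Pointwise

section MinkowskiSum

variable {𝕜 E : Type*} [AddCommGroup E] {A B : Set E} {a a' b b' : E}

theorem mem_extremePoints_right_of_add_mem_extremePoints_add [Ring 𝕜] [PartialOrder 𝕜]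
    [IsOrderedRing 𝕜] [Module 𝕜 E] (ha : a ∈ A) (hb : b ∈ B)
    (h : a + b ∈ (A + B).extremePoints 𝕜) :
    b ∈ B.extremePoints 𝕜 :=
  ⟨hb, fun _ hx₁ _ hx₂ hx ↦ add_left_cancel <|
    h.2 (Set.add_mem_add ha hx₁) (Set.add_mem_add ha hx₂) <|
      (mem_openSegment_translate 𝕜 a).2 hx⟩

theorem mem_extremePoints_left_of_add_mem_extremePoints_add [Ring 𝕜] [PartialOrder 𝕜]
    [IsOrderedRing 𝕜] [Module 𝕜 E] (ha : a ∈ A) (hb : b ∈ B)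
    (h : a + b ∈ (A + B).extremePoints 𝕜) :
    a ∈ A.extremePoints 𝕜 := by
  rw [add_comm A B, add_comm a b] at h
  exact mem_extremePoints_right_of_add_mem_extremePoints_add hb ha h

theorem eq_and_eq_of_add_eq_of_mem_extremePoints_add [Ring 𝕜] [LinearOrder 𝕜]
    [IsStrictOrderedRing 𝕜] [Invertible (2 : 𝕜)] [Module 𝕜 E]
    (ha : a ∈ A) (hb : b ∈ B) (ha' : a' ∈ A) (hb' : b' ∈ B)
    (h : a + b ∈ (A + B).extremePoints 𝕜) (hsum : a' + b' = a + b) : a' = a ∧ b' = b := by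
  have hmid : midpoint 𝕜 (a + b') (a' + b) = a + b := by
    rw [midpoint_eq_iff', Equiv.pointReflection_apply, vsub_eq_sub, vadd_eq_add,
      eq_sub_of_add_eq hsum]
    abel
  have hseg := hmid ▸ midpoint_mem_openSegment (𝕜 := 𝕜) (a + b') (a' + b)
  obtain ⟨h₁, h₂⟩ := mem_extremePoints.1 h |>.2 _ (Set.add_mem_add ha hb') _
    (Set.add_mem_add ha' hb) hseg
  exact ⟨add_right_cancel h₂, add_left_cancel h₁⟩

end MinkowskiSum

theorem latticeToReal_injective (n : ℕ) : Function.Injective (latticeToReal n) :=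
  Int.cast_injective.comp_left

theorem latticeToReal_add (n : ℕ) (v w : Fin n → ℤ) :
    latticeToReal n (v + w) = latticeToReal n v + latticeToReal n w := by
  funext i
  exact Int.cast_add (v i) (w i)

theorem newtonPolytope_extremePoint_coeff_general {n : ℕ} {R : Type*}
    [Ring R] [NoZeroDivisors R]
    (f g : AddMonoidAlgebra R (Fin n → ℤ))
    (u : Fin n → ℤ)
    (hu : latticeToReal n u ∈ Set.extremePoints ℝ
      (convexHull ℝ (latticeToReal n '' ↑f.coeff.support) +
        convexHull ℝ (latticeToReal n '' ↑g.coeff.support))) :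
    ∃ v ∈ f.coeff.support, ∃ w ∈ g.coeff.support, v + w = u ∧
      (∀ v' ∈ f.coeff.support, ∀ w' ∈ g.coeff.support, v' + w' = u → v' = v ∧ w' = w) ∧
      latticeToReal n v ∈
        Set.extremePoints ℝ (convexHull ℝ (latticeToReal n '' ↑f.coeff.support)) ∧
      latticeToReal n w ∈
        Set.extremePoints ℝ (convexHull ℝ (latticeToReal n '' ↑g.coeff.support)) ∧
      (f * g).coeff u = f.coeff v * g.coeff w ∧ (f * g).coeff u ≠ 0 := by
  obtain ⟨a, ha, b, hb, hab⟩ := Set.mem_add.1 hu.1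
  rw [← hab] at hu
  have hea := mem_extremePoints_left_of_add_mem_extremePoints_add ha hb hu
  have heb := mem_extremePoints_right_of_add_mem_extremePoints_add ha hb hu
  obtain ⟨v, hv, rfl⟩ := extremePoints_convexHull_subset hea
  obtain ⟨w, hw, rfl⟩ := extremePoints_convexHull_subset heb
  have hvw : v + w = u := latticeToReal_injective n ((latticeToReal_add n v w).trans hab)
  subst hvw
  have huniq : UniqueAdd f.coeff.support g.coeff.support v w := by
    intro v' w' hv' hw' h
    have hunique := eq_and_eq_of_add_eq_of_mem_extremePoints_add ha hb
      (subset_convexHull ℝ _ (Set.mem_image_of_mem _ hv'))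
      (subset_convexHull ℝ _ (Set.mem_image_of_mem _ hw')) hu
      (by rw [← latticeToReal_add, h, latticeToReal_add])
    exact ⟨latticeToReal_injective n hunique.1, latticeToReal_injective n hunique.2⟩
  have hcoeff := AddMonoidAlgebra.coeff_mul_add_of_uniqueAdd huniq
  refine ⟨v, hv, w, hw, rfl, fun v' hv' w' hw' h ↦ huniq hv' hw' h, hea, heb, hcoeff, ?_⟩
  rw [hcoeff]
  exact mul_ne_zero (Finsupp.mem_support_iff.1 hv) (Finsupp.mem_support_iff.1 hw)

/-- Over a nontrivial ring without zero divisors, if `u` maps to an extreme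
point of the Minkowski sum of the Newton polytopes of two nonzero Laurent
polynomials `f` and `g`, then `u` decomposes uniquely as a sum `v + w` with
`v` in the support of `f` and `w` in the support of `g`; moreover `v` and `w`
are vertices of the respective Newton polytopes and the coefficient of `f * g`
at `u` is `f v * g w ≠ 0`. -/
theorem newtonPolytope_extremePoint_coeff {n : ℕ} {R : Type*}
    [Ring R] [Nontrivial R] [NoZeroDivisors R]
    (f g : AddMonoidAlgebra R (Fin n → ℤ)) (hf : f ≠ 0) (hg : g ≠ 0)
    (u : Fin n → ℤ)
    (hu : latticeToReal n u ∈ Set.extremePoints ℝ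
      (convexHull ℝ (latticeToReal n '' ↑f.coeff.support) +
        convexHull ℝ (latticeToReal n '' ↑g.coeff.support))) :
    ∃ v ∈ f.coeff.support, ∃ w ∈ g.coeff.support, v + w = u ∧
      (∀ v' ∈ f.coeff.support, ∀ w' ∈ g.coeff.support, v' + w' = u → v' = v ∧ w' = w) ∧
      latticeToReal n v ∈
        Set.extremePoints ℝ (convexHull ℝ (latticeToReal n '' ↑f.coeff.support)) ∧
      latticeToReal n w ∈
        Set.extremePoints ℝ (convexHull ℝ (latticeToReal n '' ↑g.coeff.support)) ∧
      (f * g).coeff u = f.coeff v * g.coeff w ∧ (f * g).coeff u ≠ 0 :=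
  newtonPolytope_extremePoint_coeff_general f g u hu
end

section
/- Let n be a natural number and let f, g be nonzero elements of AddMonoidAlgebra ℤ (Fin n → ℤ). Let u ∈ (Fin n → ℤ) be such that ι(u) is an extreme point of the Newton polytope of f * g, where ι : (Fin n → ℤ) → (Fin n → ℝ) is the coordinatewise coercion, and let v ∈ support f, w ∈ support g be the unique elements with v + w = u. Then the coefficient of f * g at u satisfies |(f * g) u| = 1 if and only if |f v| = 1 and |g w| = 1. (A vertex of the Newton polytope of a product of integral Laurent polynomials is marked, i.e. has coefficient ±1, if and only if it is the sum of marked vertices of the factors.) -/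
/-! Since `u = v + w` is reached in exactly one way from the supports, the coefficient of `f * g`
at `u` is the product `f v * g w`, and a product of integers has absolute value `1` exactly when
both factors do, the units of `ℤ` being `±1`. -/

open Pointwise

theorem Int.abs_mul_eq_one_iff {a b : ℤ} : |a * b| = 1 ↔ |a| = 1 ∧ |b| = 1 := by
  simp only [← Int.isUnit_iff_abs_eq, IsUnit.mul_iff]

theorem newtonPolytope_marked_vertex_mul_general {n : ℕ}
    (f g : AddMonoidAlgebra ℤ (Fin n → ℤ))
    (u : Fin n → ℤ)
    (v w : Fin n → ℤ)
    (hvw : v + w = u)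
    (huniq : ∀ v' ∈ f.coeff.support, ∀ w' ∈ g.coeff.support, v' + w' = u → v' = v ∧ w' = w) :
    |(f * g).coeff u| = 1 ↔ |f.coeff v| = 1 ∧ |g.coeff w| = 1 := by
  subst hvw
  have hunique : UniqueAdd f.coeff.support g.coeff.support v w :=
    fun _ _ hv' hw' h ↦ huniq _ hv' _ hw' h
  rw [AddMonoidAlgebra.coeff_mul_add_of_uniqueAdd hunique, Int.abs_mul_eq_one_iff]

/-- A vertex of the Newton polytope of a product of integral Laurent
polynomials has coefficient `±1` if and only if it is the sum of support
elements of the factors whose coefficients are both `±1`. -/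
theorem newtonPolytope_marked_vertex_mul {n : ℕ}
    (f g : AddMonoidAlgebra ℤ (Fin n → ℤ)) (hf : f ≠ 0) (hg : g ≠ 0)
    (u : Fin n → ℤ)
    (hu : latticeToReal n u ∈ Set.extremePoints ℝ
      (convexHull ℝ (latticeToReal n '' ↑(f * g).coeff.support)))
    (v w : Fin n → ℤ) (hv : v ∈ f.coeff.support) (hw : w ∈ g.coeff.support)
    (hvw : v + w = u)
    (huniq : ∀ v' ∈ f.coeff.support, ∀ w' ∈ g.coeff.support, v' + w' = u → v' = v ∧ w' = w) :
    |(f * g).coeff u| = 1 ↔ |f.coeff v| = 1 ∧ |g.coeff w| = 1 :=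
  newtonPolytope_marked_vertex_mul_general f g u v w hvw huniq
end

section
/- Let n be a natural number, let R be a nontrivial (possibly noncommutative) ring with no zero divisors, let φ : (Fin n → ℤ) → ℤ be an additive group homomorphism, and let f, g be nonzero elements of AddMonoidAlgebra R (Fin n → ℤ). Then f * g ≠ 0, the maximum of φ over the support of f * g equals the sum of the maxima of φ over the supports of f and of g, and likewise the minimum of φ over the support of f * g equals the sum of the minima of φ over the supports of f and of g. In particular the φ-thickness of the support, max − min, is additive: th_φ(f * g) = th_φ(f) + th_φ(g). -/
/-!
If `φ` attains its maximum `M` on the support of `f` and `N` on that of `g`, then only the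
products of terms of `f` and `g` lying on the level sets `φ = M` and `φ = N` can reach an
exponent `x` with `φ x = M + N`. So at such `x` the coefficient of `f * g` is that of the
product of these two level parts, which is nonzero because `R[ℤⁿ]` has no zero divisors
(`ℤⁿ` has unique sums). Minima are maxima for the dual order.
-/

namespace AddMonoidAlgebra

section Extrema

variable {R A B : Type*} [Semiring R] [ConditionallyCompleteLinearOrder B] {f : R[A]}

lemma isGreatest_sSup_image_support (φ : A → B) (hf : f ≠ 0) :
    IsGreatest (φ '' f.coeff.support) (sSup (φ '' f.coeff.support)) :=
  have hfin := f.coeff.support.finite_toSet.image φ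
  have hne : f.coeff.support.Nonempty := Finsupp.support_nonempty_iff.2 (coeff_eq_zero.not.2 hf)
  ⟨(hne.to_set.image φ).csSup_mem hfin, fun _ hx ↦ le_csSup hfin.bddAbove hx⟩

lemma isLeast_sInf_image_support (φ : A → B) (hf : f ≠ 0) :
    IsLeast (φ '' f.coeff.support) (sInf (φ '' f.coeff.support)) :=
  isGreatest_sSup_image_support (B := Bᵒᵈ) φ hf

end Extrema

section LevelPart

variable {R A B : Type*} [Semiring R] [DecidableEq B]

def levelPart (φ : A → B) (b : B) (f : R[A]) : R[A] :=
  ofCoeff (f.coeff.filter fun a ↦ φ a = b)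

variable {φ : A → B} {b : B} {f : R[A]}

lemma coeff_levelPart (a : A) :
    (levelPart φ b f).coeff a = if φ a = b then f.coeff a else 0 :=
  Finsupp.filter_apply _ _ _

lemma support_levelPart :
    (levelPart φ b f).coeff.support = f.coeff.support.filter fun a ↦ φ a = b :=
  Finsupp.support_filter _ _

lemma support_levelPart_subset : (levelPart φ b f).coeff.support ⊆ f.coeff.support :=
  Finset.filter_subset _ _

lemma levelPart_ne_zero (hb : b ∈ φ '' f.coeff.support) : levelPart φ b f ≠ 0 := by
  obtain ⟨a, ha, rfl⟩ := hb
  refine ne_of_apply_ne (fun p ↦ p.coeff a) ?_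
  simpa [coeff_levelPart] using ha

end LevelPart

variable {R A B : Type*} [Semiring R] [Add A]
  [AddCommMonoid B] [LinearOrder B] [IsOrderedCancelAddMonoid B]
  {φ : A → B} {f g : R[A]} {M N : B}

lemma coeff_mul_eq_coeff_levelPart_mul_levelPart
    (hφ : ∀ a₁ a₂, φ (a₁ + a₂) = φ a₁ + φ a₂)
    (hM : M ∈ upperBounds (φ '' f.coeff.support))
    (hN : N ∈ upperBounds (φ '' g.coeff.support))
    {x : A} (hx : φ x = M + N) :
    (f * g).coeff x = (levelPart φ M f * levelPart φ N g).coeff x := by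
  classical
  rw [coeff_mul, coeff_mul, Finsupp.sum_of_support_subset _ support_levelPart_subset _ (by simp),
    Finsupp.sum]
  refine Finset.sum_congr rfl fun a ha ↦ ?_
  rw [Finsupp.sum_of_support_subset _ support_levelPart_subset _ (by simp), Finsupp.sum]
  refine Finset.sum_congr rfl fun b hb ↦ ?_
  split_ifs with hab
  · have hlevel : φ a = M ∧ φ b = N := (add_eq_add_iff_eq_and_eq (hM ⟨a, ha, rfl⟩)
      (hN ⟨b, hb, rfl⟩)).1 (by rw [← hφ, hab, hx])
    simp [coeff_levelPart, hlevel]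
  · rfl

theorem isGreatest_image_support_mul [NoZeroDivisors R] [UniqueSums A]
    (hφ : ∀ a₁ a₂, φ (a₁ + a₂) = φ a₁ + φ a₂)
    (hf : IsGreatest (φ '' f.coeff.support) M) (hg : IsGreatest (φ '' g.coeff.support) N) :
    IsGreatest (φ '' (f * g).coeff.support) (M + N) := by
  classical
  refine ⟨?_, ?_⟩
  · obtain ⟨x, hx⟩ := Finsupp.support_nonempty_iff.2 <| coeff_eq_zero.not.2 <|
      mul_ne_zero (levelPart_ne_zero hf.1) (levelPart_ne_zero hg.1)
    obtain ⟨a, ha, b, hb, rfl⟩ := Finset.mem_add.1 (support_coeff_mul_subset _ _ hx)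
    simp only [support_levelPart, Finset.mem_filter] at ha hb
    have hab : φ (a + b) = M + N := by rw [hφ, ha.2, hb.2]
    refine ⟨a + b, ?_, hab⟩
    rw [Finset.mem_coe, Finsupp.mem_support_iff,
      coeff_mul_eq_coeff_levelPart_mul_levelPart hφ hf.2 hg.2 hab]
    exact Finsupp.mem_support_iff.1 hx
  · rintro _ ⟨x, hx, rfl⟩
    obtain ⟨a, ha, b, hb, rfl⟩ := Finset.mem_add.1 (support_coeff_mul_subset _ _ hx)
    rw [hφ]
    exact add_le_add (hf.2 ⟨a, ha, rfl⟩) (hg.2 ⟨b, hb, rfl⟩)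

theorem isLeast_image_support_mul [NoZeroDivisors R] [UniqueSums A]
    (hφ : ∀ a₁ a₂, φ (a₁ + a₂) = φ a₁ + φ a₂)
    (hf : IsLeast (φ '' f.coeff.support) M) (hg : IsLeast (φ '' g.coeff.support) N) :
    IsLeast (φ '' (f * g).coeff.support) (M + N) :=
  isGreatest_image_support_mul (B := Bᵒᵈ) (φ := OrderDual.toDual ∘ φ) hφ hf hg

end AddMonoidAlgebra

theorem thickness_support_mul_general {n : ℕ} {R : Type*}
    [Ring R] [NoZeroDivisors R]
    (φ : (Fin n → ℤ) →+ ℤ)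
    (f g : AddMonoidAlgebra R (Fin n → ℤ)) (hf : f ≠ 0) (hg : g ≠ 0) :
    f * g ≠ 0 ∧
    sSup (φ '' ↑(f * g).coeff.support) =
      sSup (φ '' ↑f.coeff.support) + sSup (φ '' ↑g.coeff.support) ∧
    sInf (φ '' ↑(f * g).coeff.support) =
      sInf (φ '' ↑f.coeff.support) + sInf (φ '' ↑g.coeff.support) ∧
    sSup (φ '' ↑(f * g).coeff.support) - sInf (φ '' ↑(f * g).coeff.support) =
      (sSup (φ '' ↑f.coeff.support) - sInf (φ '' ↑f.coeff.support)) +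
        (sSup (φ '' ↑g.coeff.support) - sInf (φ '' ↑g.coeff.support)) := by
  open AddMonoidAlgebra in
  have hsup := (isGreatest_image_support_mul (map_add φ) (isGreatest_sSup_image_support φ hf)
    (isGreatest_sSup_image_support φ hg)).csSup_eq
  have hinf := (isLeast_image_support_mul (map_add φ) (isLeast_sInf_image_support φ hf)
    (isLeast_sInf_image_support φ hg)).csInf_eq
  exact ⟨mul_ne_zero hf hg, hsup, hinf, by rw [hsup, hinf]; abel⟩

/-- For nonzero Laurent polynomials `f, g` over a nontrivial ring without zero
divisors and an additive homomorphism `φ : ℤⁿ → ℤ`, the product `f * g` is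
nonzero, the maximum (resp. minimum) of `φ` on the support of `f * g` is the
sum of the maxima (resp. minima) of `φ` on the supports of `f` and `g`, and
hence the `φ`-thickness `max - min` of the support is additive. -/
theorem thickness_support_mul {n : ℕ} {R : Type*}
    [Ring R] [Nontrivial R] [NoZeroDivisors R]
    (φ : (Fin n → ℤ) →+ ℤ)
    (f g : AddMonoidAlgebra R (Fin n → ℤ)) (hf : f ≠ 0) (hg : g ≠ 0) :
    f * g ≠ 0 ∧
    sSup (φ '' ↑(f * g).coeff.support) =
      sSup (φ '' ↑f.coeff.support) + sSup (φ '' ↑g.coeff.support) ∧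
    sInf (φ '' ↑(f * g).coeff.support) =
      sInf (φ '' ↑f.coeff.support) + sInf (φ '' ↑g.coeff.support) ∧
    sSup (φ '' ↑(f * g).coeff.support) - sInf (φ '' ↑(f * g).coeff.support) =
      (sSup (φ '' ↑f.coeff.support) - sInf (φ '' ↑f.coeff.support)) +
        (sSup (φ '' ↑g.coeff.support) - sInf (φ '' ↑g.coeff.support)) :=
  thickness_support_mul_general φ f g hf hg
end

section
/- The monoid of marked polytopes under marked Minkowski sum does not have the cancellation property. Precisely: there exist nonempty finite sets A, B ⊆ ℝ² (with ℝ² = EuclideanSpace ℝ (Fin 2) or Fin 2 → ℝ) and nonempty marking sets V ⊆ Set.extremePoints ℝ (convexHull ℝ A), W ⊆ Set.extremePoints ℝ (convexHull ℝ B), W' ⊆ Set.extremePoints ℝ (convexHull ℝ B) with W ≠ W', such that the marked Minkowski sums agree: {v + w | v ∈ V, w ∈ W} ∩ Set.extremePoints ℝ (convexHull ℝ A + convexHull ℝ B) = {v + w' | v ∈ V, w' ∈ W'} ∩ Set.extremePoints ℝ (convexHull ℝ A + convexHull ℝ B). -/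
/-!
Mark the segment `[0, e]` at `0` only, and a second copy of it either at both endpoints or at `0`
only. The two markings are different, but in the Minkowski sum `[0, 2e]` the only additional
candidate `0 + e = e` is the midpoint of `0` and `2e`, hence not a vertex, so both marked sums are
`([0, 2e], {0})`.
-/

open Pointwise Set

theorem AffineMap.image_extremePoints_of_injective {𝕜 E F : Type*} [Ring 𝕜] [PartialOrder 𝕜]
    [AddRightMono 𝕜] [AddCommGroup E] [Module 𝕜 E] [AddCommGroup F] [Module 𝕜 F]
    (f : E →ᵃ[𝕜] F) (hf : Function.Injective f) (s : Set E) :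
    f '' s.extremePoints 𝕜 = (f '' s).extremePoints 𝕜 := by
  have key : ∀ a, f a ∈ (f '' s).extremePoints 𝕜 ↔ a ∈ s.extremePoints 𝕜 := fun a ↦ by
    simp only [mem_extremePoints, forall_mem_image, ← image_openSegment, hf.mem_set_image,
      hf.eq_iff]
  ext b
  constructor
  · rintro ⟨a, ha, rfl⟩
    exact (key a).2 ha
  · intro hb
    obtain ⟨a, -, rfl⟩ := extremePoints_subset hb
    exact ⟨a, (key a).1 hb, rfl⟩

theorem extremePoints_segment {E : Type*} [AddCommGroup E] [Module ℝ E] {x y : E} (h : x ≠ y) :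
    (segment ℝ x y).extremePoints ℝ = {x, y} := by
  rw [segment_eq_image_lineMap, ← (AffineMap.lineMap x y).image_extremePoints_of_injective
    (AffineMap.lineMap_injective ℝ h), extremePoints_Icc zero_le_one, image_pair,
    AffineMap.lineMap_apply_zero, AffineMap.lineMap_apply_one]

theorem add_notMem_extremePoints_add_self {𝕜 E : Type*} [Field 𝕜] [LinearOrder 𝕜]
    [IsStrictOrderedRing 𝕜] [AddCommGroup E] [Module 𝕜 E] {s : Set E} {p q : E}
    (hp : p ∈ s) (hq : q ∈ s) (hpq : p ≠ q) : p + q ∉ (s + s).extremePoints 𝕜 := by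
  intro h
  have hmid : p + q ∈ openSegment 𝕜 (p + p) (q + q) :=
    ⟨1 / 2, 1 / 2, by norm_num, by norm_num, by norm_num, by module⟩
  exact hpq (add_left_cancel ((mem_extremePoints.1 h).2 _ (add_mem_add hp hp) _
    (add_mem_add hq hq) hmid).1)

/-- The monoid of marked polytopes under marked Minkowski sum does not have
the cancellation property: there are marked polytopes `(convexHull ℝ A, V)`,
`(convexHull ℝ B, W)` and `(convexHull ℝ B, W')` with `W ≠ W'` whose marked
Minkowski sums with `(convexHull ℝ A, V)` agree. -/
theorem marked_polytopes_not_cancellative :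
    ∃ (A B : Set (Fin 2 → ℝ)) (V W W' : Set (Fin 2 → ℝ)),
      A.Finite ∧ A.Nonempty ∧ B.Finite ∧ B.Nonempty ∧
      V.Nonempty ∧ W.Nonempty ∧ W'.Nonempty ∧
      V ⊆ Set.extremePoints ℝ (convexHull ℝ A) ∧
      W ⊆ Set.extremePoints ℝ (convexHull ℝ B) ∧
      W' ⊆ Set.extremePoints ℝ (convexHull ℝ B) ∧
      W ≠ W' ∧
      (V + W) ∩ Set.extremePoints ℝ (convexHull ℝ A + convexHull ℝ B) =
        (V + W') ∩ Set.extremePoints ℝ (convexHull ℝ A + convexHull ℝ B) := by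
  set e : Fin 2 → ℝ := Pi.single 0 1
  have he : (0 : Fin 2 → ℝ) ≠ e := (Pi.single_ne_zero_iff.2 one_ne_zero).symm
  have hext : extremePoints ℝ (convexHull ℝ {0, e}) = {0, e} := by
    rw [convexHull_pair, extremePoints_segment he]
  have h0 : (0 : Fin 2 → ℝ) ∈ extremePoints ℝ (convexHull ℝ {0, e}) := hext.ge (mem_insert 0 {e})
  have he_not_ext : e ∉ extremePoints ℝ (convexHull ℝ {0, e} + convexHull ℝ {0, e}) := by
    simpa using add_notMem_extremePoints_add_self (𝕜 := ℝ) (subset_convexHull ℝ {0, e} (by simp))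
      (subset_convexHull ℝ {0, e} (by simp)) he
  refine ⟨{0, e}, {0, e}, {0}, {0, e}, {0}, by simp, by simp, by simp, by simp, by simp, by simp,
    by simp, singleton_subset_iff.2 h0, hext.ge, singleton_subset_iff.2 h0, ?_, ?_⟩
  · exact fun h ↦ he.symm (h.subset (mem_insert_of_mem 0 rfl))
  · simp only [singleton_add, zero_add, image_id']
    exact congrArg (· ∩ _) (pair_comm 0 e) |>.trans (insert_inter_of_notMem he_not_ext)
end
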